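/- arXiv:1801.02831 — 2 statements merged into one kernel-verified Lean document; each statement's English description precedes it below -/
import Mathlib

section
/- Let Λ be the (ℓ+1)×(ℓ+1) Jordan block with eigenvalue λ, |λ| > 1, and let v = (x₀,…,x_ℓ) ∈ ℂ^{ℓ+1} be a nonzero vector. Set t := ℓ − min{ i : x_i ≠ 0 }. Then ‖Λ^n v‖ ≍ n^t |λ|^n, i.e., there exist constants C₀, C₁ > 0 and N₀ such that C₀ n^t |λ|^n ≤ ‖Λ^n v‖ ≤ C₁ n^t |λ|^n for all n ≥ N₀. -/
/-- The (ℓ+1)×(ℓ+1) Jordan block with eigenvalue `lam`: `lam` on the diagonal,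
1's on the subdiagonal. -/
noncomputable def jordanBlock (ℓ : ℕ) (lam : ℂ) :
    Matrix (Fin (ℓ + 1)) (Fin (ℓ + 1)) ℂ :=
  fun i j => if i = j then lam else if (i : ℕ) = (j : ℕ) + 1 then 1 else 0

/-- The maximum of the absolute values of the entries of a vector. -/
noncomputable def vnorm {ℓ : ℕ} (v : Fin (ℓ + 1) → ℂ) : ℝ :=
  Finset.univ.sup' Finset.univ_nonempty (fun i => ‖v i‖)

/-!
Write `Λ = N + λ` with `N` the nilpotent lower shift, which commutes with `λ`; by the binomial
theorem `(Λⁿ)ᵢⱼ = C(n, i - j) λ^(n - (i - j))` for `j ≤ i`, and `‖C(n, d) λ^(n - d)‖ ≍ n^d |λ|ⁿ`.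
Only the entries `v j` with `j ≥ i₀` contribute, so every coordinate of `Λⁿ v` is
`O(n^t |λ|ⁿ)`; in the last coordinate the `j = i₀` term has exact order `n^t |λ|ⁿ` and all other
terms are `o(n^t |λ|ⁿ)`.
-/

open Asymptotics Filter Finset
open scoped Matrix

lemma Asymptotics.IsTheta.exists_pos_bounds {α E F : Type*} [SeminormedAddCommGroup E]
    [SeminormedAddCommGroup F] {l : Filter α} {f : α → E} {g : α → F} (h : f =Θ[l] g) :
    ∃ C₀ > 0, ∃ C₁ > 0, ∀ᶠ x in l, C₀ * ‖g x‖ ≤ ‖f x‖ ∧ ‖f x‖ ≤ C₁ * ‖g x‖ := by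
  obtain ⟨c₀, hc₀, hlow⟩ := h.isBigO_symm.exists_pos
  obtain ⟨C₁, hC₁, hup⟩ := h.isBigO.exists_pos
  refine ⟨c₀⁻¹, inv_pos.2 hc₀, C₁, hC₁, hlow.bound.and hup.bound |>.mono fun x hx => ⟨?_, hx.2⟩⟩
  rw [inv_mul_le_iff₀ hc₀]
  exact hx.1

lemma isLittleO_natCast_pow_mul_pow {d t : ℕ} (h : d < t) (a : ℝ) :
    (fun n : ℕ => (n : ℝ) ^ d * a ^ n) =o[atTop] fun n => (n : ℝ) ^ t * a ^ n :=
  ((isLittleO_pow_pow_atTop_of_lt h).comp_tendsto tendsto_natCast_atTop_atTop).mul_isBigO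
    (isBigO_refl _ _)

lemma isBigO_natCast_pow_mul_pow {d t : ℕ} (h : d ≤ t) (a : ℝ) :
    (fun n : ℕ => (n : ℝ) ^ d * a ^ n) =O[atTop] fun n => (n : ℝ) ^ t * a ^ n :=
  h.eq_or_lt.elim (fun h => h ▸ isBigO_refl _ _) fun h => (isLittleO_natCast_pow_mul_pow h a).isBigO

lemma isTheta_choose_mul_pow {𝕜 : Type*} [RCLike 𝕜] {lam : 𝕜} (hlam : lam ≠ 0) (d : ℕ) :
    (fun n : ℕ => (n.choose d : 𝕜) * lam ^ (n - d)) =Θ[atTop] fun n => (n : ℝ) ^ d * ‖lam‖ ^ n := by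
  have hchoose : (fun n : ℕ => (n.choose d : 𝕜)) =Θ[atTop] fun n => (n : ℝ) ^ d := by
    rw [← isTheta_norm_left]
    simpa using isTheta_choose d
  have hpow : (fun n : ℕ => lam ^ (n - d)) =Θ[atTop] fun n => ‖lam‖ ^ n := by
    have heq : (fun n : ℕ => lam ^ (n - d)) =ᶠ[atTop] fun n => (lam ^ d)⁻¹ * lam ^ n :=
      eventually_atTop.2 ⟨d, fun n hn => by dsimp only; rw [pow_sub₀ lam hlam hn, mul_comm]⟩
    refine heq.trans_isTheta ((isTheta_const_mul_left (inv_ne_zero (pow_ne_zero d hlam))).2 ?_)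
    simpa using (isTheta_norm_right (g' := fun n : ℕ => lam ^ n)).2 isTheta_rfl
  exact hchoose.mul hpow

def lowerShift (R : Type*) [Zero R] [One R] (m : ℕ) : Matrix (Fin m) (Fin m) R :=
  fun i j => if (i : ℕ) = j + 1 then 1 else 0

lemma lowerShift_pow_apply {R : Type*} [Semiring R] {m : ℕ} (k : ℕ) (i j : Fin m) :
    (lowerShift R m ^ k) i j = if (i : ℕ) = j + k then 1 else 0 := by
  induction k generalizing i with
  | zero => simp [Matrix.one_apply, Fin.ext_iff]
  | succ k ih =>
    rw [pow_succ', Matrix.mul_apply]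
    simp only [lowerShift, ih, mul_ite, mul_one, mul_zero]
    rw [Fin.sum_univ_eq_sum_range (fun c => if c = j + k then
      if (i : ℕ) = c + 1 then (1 : R) else 0 else 0) m]
    simp only [sum_ite_eq', mem_range]
    grind

lemma jordanBlock_eq_lowerShift_add_smul_one (ℓ : ℕ) (lam : ℂ) :
    jordanBlock ℓ lam = lowerShift ℂ (ℓ + 1) + lam • 1 := by
  ext i j
  simp only [jordanBlock, lowerShift, Matrix.add_apply, Matrix.smul_apply, Matrix.one_apply,
    smul_eq_mul, mul_ite, mul_one, mul_zero]
  grind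

lemma jordanBlock_pow_apply (ℓ : ℕ) (lam : ℂ) (n : ℕ) (i j : Fin (ℓ + 1)) :
    (jordanBlock ℓ lam ^ n) i j =
      if j ≤ i then (n.choose (i - j : ℕ) : ℂ) * lam ^ (n - (i - j : ℕ)) else 0 := by
  rw [jordanBlock_eq_lowerShift_add_smul_one, ((Commute.one_right _).smul_right lam).add_pow,
    Matrix.sum_apply]
  simp only [smul_pow, one_pow, mul_smul_comm, mul_one, ← Matrix.diagonal_natCast,
    Matrix.mul_diagonal, Matrix.smul_apply, lowerShift_pow_apply, smul_eq_mul, mul_ite, mul_zero]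
  split_ifs with hji
  · rw [sum_eq_single (i - j : ℕ)]
    · rw [if_pos (by omega), mul_comm]
    · intro x _ hx
      rw [if_neg (by omega), zero_mul]
    · intro hout
      rw [Nat.choose_eq_zero_of_lt (by rw [mem_range] at hout; omega), Nat.cast_zero, mul_zero]
  · exact sum_eq_zero fun x _ => by rw [if_neg (by omega), zero_mul]

lemma jordanBlock_pow_mulVec_apply (ℓ : ℕ) (lam : ℂ) (v : Fin (ℓ + 1) → ℂ) (n : ℕ)
    (i : Fin (ℓ + 1)) :
    (jordanBlock ℓ lam ^ n *ᵥ v) i =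
      ∑ j ∈ Iic i, v j * ((n.choose (i - j : ℕ) : ℂ) * lam ^ (n - (i - j : ℕ))) := by
  simp only [Matrix.mulVec, dotProduct, jordanBlock_pow_apply, ite_mul, zero_mul, ← sum_filter,
    filter_ge_eq_Iic, mul_comm (v _)]

section JordanBlock

variable {ℓ : ℕ} {lam : ℂ} {v : Fin (ℓ + 1) → ℂ} {i₀ : Fin (ℓ + 1)}

lemma isBigO_jordanBlock_pow_mulVec (hlam : lam ≠ 0) (hmin : ∀ j < i₀, v j = 0) :
    (fun n : ℕ => jordanBlock ℓ lam ^ n *ᵥ v) =O[atTop]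
      fun n => (n : ℝ) ^ (ℓ - i₀ : ℕ) * ‖lam‖ ^ n := by
  refine isBigO_pi.2 fun i => ?_
  simp_rw [jordanBlock_pow_mulVec_apply]
  refine IsBigO.fun_sum fun j _ => ?_
  by_cases hvj : v j = 0
  · simpa [hvj] using isBigO_zero _ _
  · have hj : (i₀ : ℕ) ≤ j := not_lt.1 (mt (hmin j) hvj)
    exact ((isTheta_choose_mul_pow hlam _).isBigO.trans
      (isBigO_natCast_pow_mul_pow (by omega) _)).const_mul_left _

lemma isTheta_jordanBlock_pow_mulVec_last (hlam : lam ≠ 0) (hi₀ : v i₀ ≠ 0)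
    (hmin : ∀ j < i₀, v j = 0) :
    (fun n : ℕ => (jordanBlock ℓ lam ^ n *ᵥ v) (Fin.last ℓ)) =Θ[atTop]
      fun n => (n : ℝ) ^ (ℓ - i₀ : ℕ) * ‖lam‖ ^ n := by
  simp_rw [jordanBlock_pow_mulVec_apply, ← add_sum_erase _ _ (mem_Iic.2 (Fin.le_last i₀)),
    Fin.val_last]
  refine ((isTheta_const_mul_left hi₀).2 (isTheta_choose_mul_pow hlam _)).add_isLittleO ?_
  refine IsLittleO.fun_sum fun j hj => ?_
  by_cases hvj : v j = 0
  · simp [hvj]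
  · have hj : (i₀ : ℕ) < j := lt_of_le_of_ne (not_lt.1 (mt (hmin j) hvj))
      (Fin.val_ne_of_ne (ne_of_mem_erase hj).symm)
    exact ((isTheta_choose_mul_pow hlam _).isBigO.trans_isLittleO
      (isLittleO_natCast_pow_mul_pow (by omega) _)).const_mul_left _

lemma isTheta_jordanBlock_pow_mulVec (hlam : lam ≠ 0) (hi₀ : v i₀ ≠ 0)
    (hmin : ∀ j < i₀, v j = 0) :
    (fun n : ℕ => jordanBlock ℓ lam ^ n *ᵥ v) =Θ[atTop]
      fun n => (n : ℝ) ^ (ℓ - i₀ : ℕ) * ‖lam‖ ^ n :=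
  ⟨isBigO_jordanBlock_pow_mulVec hlam hmin,
    (isTheta_jordanBlock_pow_mulVec_last hlam hi₀ hmin).isBigO_symm.trans_le fun _ =>
      norm_le_pi_norm _ _⟩

end JordanBlock

lemma vnorm_eq_norm {ℓ : ℕ} (v : Fin (ℓ + 1) → ℂ) : vnorm v = ‖v‖ :=
  le_antisymm (sup'_le _ _ fun i _ => norm_le_pi_norm v i)
    ((pi_norm_le_iff_of_nonneg ((norm_nonneg _).trans (le_sup' (fun i => ‖v i‖) (mem_univ 0)))).2
      fun i => le_sup' (fun i => ‖v i‖) (mem_univ i))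

theorem jordan_power_vec_asymp (ℓ : ℕ) (lam : ℂ) (hlam : 1 < ‖lam‖)
    (v : Fin (ℓ + 1) → ℂ) (i₀ : Fin (ℓ + 1)) (hi₀ : v i₀ ≠ 0)
    (hmin : ∀ j : Fin (ℓ + 1), j < i₀ → v j = 0) :
    ∃ (C₀ C₁ : ℝ) (N₀ : ℕ), 0 < C₀ ∧ 0 < C₁ ∧
      ∀ n : ℕ, N₀ ≤ n →
        C₀ * (n : ℝ) ^ (ℓ - (i₀ : ℕ)) * ‖lam‖ ^ n ≤
            vnorm (((jordanBlock ℓ lam) ^ n).mulVec v) ∧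
        vnorm (((jordanBlock ℓ lam) ^ n).mulVec v) ≤
            C₁ * (n : ℝ) ^ (ℓ - (i₀ : ℕ)) * ‖lam‖ ^ n := by
  have hlam₀ : lam ≠ 0 := norm_pos_iff.1 (one_pos.trans hlam)
  obtain ⟨C₀, hC₀, C₁, hC₁, hbounds⟩ :=
    (isTheta_jordanBlock_pow_mulVec hlam₀ hi₀ hmin).exists_pos_bounds
  obtain ⟨N₀, hN₀⟩ := eventually_atTop.1 hbounds
  refine ⟨C₀, C₁, N₀, hC₀, hC₁, fun n hn => ?_⟩
  have hg : ‖(n : ℝ) ^ (ℓ - (i₀ : ℕ)) * ‖lam‖ ^ n‖ = (n : ℝ) ^ (ℓ - (i₀ : ℕ)) * ‖lam‖ ^ n :=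
    Real.norm_of_nonneg (by positivity)
  simpa only [vnorm_eq_norm, hg, mul_assoc] using hN₀ n hn
end

section
/- Liminf-normalized height functional equations: let X be a set, f, g: X → X commuting maps, h: X → ℝ_{≥1}, α, β > 1 reals and t ∈ ℤ_{≥0}. Suppose: (i) ĥ: X → ℝ satisfies ĥ(f(x)) = α ĥ(x) for all x; (ii) for R ∈ X, h(g^n(R)) ≍ n^t β^n and also h(g^n(f(R))) ≍ n^t β^n; (iii) ĥ − h is bounded in absolute value by C·√h for some C. Define H(x) := liminf_{n→∞} ĥ(g^n(x)) / (n^t β^n). Then H(R) > 0, H(f(R)) = α H(R), and H(g(R)) = β H(R). -/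
/-!
Write `d n = n ^ t * β ^ n`. The hypothesis `|ĥ - h| ≤ C √h` together with `h (g^[n] R) ≤ C₁ d n`
gives `ĥ (g^[n] R) / d n - h (g^[n] R) / d n = O(1 / √(d n)) → 0`, so the normalized canonical
heights have the same liminf as the normalized naive heights, which is at least `C₀`. Since
`g^[n] ∘ f = f ∘ g^[n]`, the sequence for `f R` is `α` times the one for `R`; the sequence for
`g R` is the one for `R` shifted by one and multiplied by `d (n + 1) / d n → β`.
-/

open Filter Topology

section Liminf

variable {ι : Type*} {l : Filter ι} {u v : ι → ℝ}

theorem isBoundedUnder_le_of_tendsto_sub (hv : IsBoundedUnder (· ≤ ·) l v)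
    (h : Tendsto (u - v) l (𝓝 0)) : IsBoundedUnder (· ≤ ·) l u := by
  simpa using isBoundedUnder_le_add h.isBoundedUnder_le hv

theorem isBoundedUnder_ge_of_tendsto_sub (hv : IsBoundedUnder (· ≥ ·) l v)
    (h : Tendsto (u - v) l (𝓝 0)) : IsBoundedUnder (· ≥ ·) l u := by
  simpa using isBoundedUnder_ge_add h.isBoundedUnder_ge hv

theorem liminf_eq_of_tendsto_sub [l.NeBot] (hv_le : IsBoundedUnder (· ≤ ·) l v)
    (hv_ge : IsBoundedUnder (· ≥ ·) l v) (h : Tendsto (u - v) l (𝓝 0)) :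
    liminf u l = liminf v l := by
  rw [← sub_add_cancel u v]
  apply le_antisymm
  · simpa [h.limsup_eq] using
      liminf_add_le h.isBoundedUnder_ge h.isBoundedUnder_le hv_ge hv_le.isCoboundedUnder_ge
  · simpa [h.liminf_eq] using
      le_liminf_add h.isBoundedUnder_ge h.isBoundedUnder_le hv_ge hv_le.isCoboundedUnder_ge

theorem liminf_const_mul_of_nonneg [l.NeBot] {c : ℝ} (hc : 0 ≤ c)
    (hu_co : IsCoboundedUnder (· ≥ ·) l u) (hu_ge : IsBoundedUnder (· ≥ ·) l u) :
    liminf (fun i => c * u i) l = c * liminf u l :=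
  ((monotone_mul_left_of_nonneg hc).map_liminf_of_continuousAt u
    (continuous_const_mul c).continuousAt hu_co hu_ge).symm

theorem liminf_mul_of_tendsto [l.NeBot] {r : ι → ℝ} {b : ℝ} (hb : 0 ≤ b)
    (hr : Tendsto r l (𝓝 b)) (hu_le : IsBoundedUnder (· ≤ ·) l u)
    (hu_ge : IsBoundedUnder (· ≥ ·) l u) :
    liminf (fun i => r i * u i) l = b * liminf u l := by
  have hbu_le : IsBoundedUnder (· ≤ ·) l (fun i => b * u i) :=
    (monotone_mul_left_of_nonneg hb).isBoundedUnder_le_comp hu_le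
  have hbu_ge : IsBoundedUnder (· ≥ ·) l (fun i => b * u i) :=
    (monotone_mul_left_of_nonneg hb).isBoundedUnder_ge_comp hu_ge
  have hdiff : Tendsto (fun i => (r i - b) * u i) l (𝓝 0) :=
    (tendsto_sub_nhds_zero_iff.2 hr).zero_mul_isBoundedUnder_le
      (isBoundedUnder_le_abs.2 ⟨hu_le, hu_ge⟩)
  rw [liminf_eq_of_tendsto_sub hbu_le hbu_ge (by simpa only [Pi.sub_def, sub_mul] using hdiff),
    liminf_const_mul_of_nonneg hb hu_le.isCoboundedUnder_ge hu_ge]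

theorem liminf_mul_shift_of_tendsto {u r : ℕ → ℝ} {b : ℝ} (hb : 0 ≤ b)
    (hr : Tendsto r atTop (𝓝 b)) (hu_le : IsBoundedUnder (· ≤ ·) atTop u)
    (hu_ge : IsBoundedUnder (· ≥ ·) atTop u) :
    liminf (fun n => r n * u (n + 1)) atTop = b * liminf u atTop := by
  have hshift := tendsto_add_atTop_nat 1
  exact (liminf_mul_of_tendsto hb hr (hshift.isBoundedUnder_comp hu_le)
    (hshift.isBoundedUnder_comp hu_ge)).trans (congrArg _ (liminf_nat_add u 1))

theorem tendsto_div_sub_div_of_abs_sub_le_mul_sqrt {a b d : ι → ℝ} {C K : ℝ}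
    (hd : Tendsto d l atTop) (hab : ∀ i, |a i - b i| ≤ C * √(b i))
    (hb : ∀ᶠ i in l, b i ≤ K * d i) :
    Tendsto (fun i => a i / d i - b i / d i) l (𝓝 0) := by
  have hlim : Tendsto (fun i => |C| * √K / √(d i)) l (𝓝 0) :=
    tendsto_const_nhds.div_atTop (Real.tendsto_sqrt_atTop.comp hd)
  refine squeeze_zero_norm' ?_ hlim
  filter_upwards [hb, hd.eventually_gt_atTop 0] with i hbi hdi
  calc ‖a i / d i - b i / d i‖ = |a i - b i| / (√(d i) * √(d i)) := by
        rw [Real.norm_eq_abs, ← sub_div, abs_div, abs_of_pos hdi, Real.mul_self_sqrt hdi.le]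
    _ ≤ |C| * √K * √(d i) / (√(d i) * √(d i)) := by
        gcongr
        calc |a i - b i| ≤ |C| * √(b i) := (hab i).trans (by gcongr; exact le_abs_self C)
          _ ≤ |C| * √(K * d i) := by gcongr
          _ = |C| * √K * √(d i) := by rw [Real.sqrt_mul' K hdi.le, mul_assoc]
    _ = |C| * √K / √(d i) := by field_simp

end Liminf

section Growth

variable (t : ℕ) {β : ℝ}

theorem tendsto_natCast_pow_mul_pow_atTop (hβ : 1 < β) :
    Tendsto (fun n : ℕ => (n : ℝ) ^ t * β ^ n) atTop atTop := by
  refine tendsto_atTop_mono' atTop ?_ (tendsto_pow_atTop_atTop_of_one_lt hβ)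
  filter_upwards [eventually_ge_atTop 1] with n hn
  exact le_mul_of_one_le_left (by positivity) (one_le_pow₀ (by exact_mod_cast hn))

theorem tendsto_natCast_pow_mul_pow_succ_div (hβ : β ≠ 0) :
    Tendsto (fun n : ℕ => ((n + 1 : ℕ) : ℝ) ^ t * β ^ (n + 1) / ((n : ℝ) ^ t * β ^ n))
      atTop (𝓝 β) := by
  have hlim : Tendsto (fun n : ℕ => (1 + 1 / (n : ℝ)) ^ t * β) atTop (𝓝 β) := by
    simpa using (((tendsto_const_nhds (x := (1 : ℝ))).add
      tendsto_one_div_atTop_nhds_zero_nat).pow t).mul_const β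
  refine hlim.congr' ?_
  filter_upwards [eventually_ge_atTop 1] with n hn
  have hn0 : (n : ℝ) ≠ 0 := by positivity
  rw [one_add_div hn0, div_pow]
  push_cast
  field_simp
  ring

end Growth

theorem double_canonical_height_functional_equations_general {X : Type*}
    (f g : X → X) (hcomm : ∀ x, f (g x) = g (f x))
    (h : X → ℝ)
    (α β : ℝ) (hα : 1 < α) (hβ : 1 < β) (t : ℕ)
    (hhat : X → ℝ) (hfe : ∀ x, hhat (f x) = α * hhat x)
    (R : X)
    (C₀ C₁ : ℝ) (hC₀ : 0 < C₀) (N₀ : ℕ)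
    (hasympR : ∀ n : ℕ, N₀ ≤ n →
      C₀ * (n : ℝ) ^ t * β ^ n ≤ h (g^[n] R) ∧
      h (g^[n] R) ≤ C₁ * (n : ℝ) ^ t * β ^ n)
    (C : ℝ) (hcomp : ∀ x, |hhat x - h x| ≤ C * Real.sqrt (h x)) :
    0 < Filter.liminf (fun n : ℕ => hhat (g^[n] R) / ((n : ℝ) ^ t * β ^ n))
          Filter.atTop ∧
    Filter.liminf (fun n : ℕ => hhat (g^[n] (f R)) / ((n : ℝ) ^ t * β ^ n))
          Filter.atTop =
      α * Filter.liminf (fun n : ℕ => hhat (g^[n] R) / ((n : ℝ) ^ t * β ^ n))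
          Filter.atTop ∧
    Filter.liminf (fun n : ℕ => hhat (g^[n] (g R)) / ((n : ℝ) ^ t * β ^ n))
          Filter.atTop =
      β * Filter.liminf (fun n : ℕ => hhat (g^[n] R) / ((n : ℝ) ^ t * β ^ n))
          Filter.atTop := by
  set d : ℕ → ℝ := fun n => (n : ℝ) ^ t * β ^ n
  set u : ℕ → ℝ := fun n => hhat (g^[n] R) / d n
  set v : ℕ → ℝ := fun n => h (g^[n] R) / d n
  have hd := tendsto_natCast_pow_mul_pow_atTop t hβ
  have hv : ∀ᶠ n in atTop, C₀ ≤ v n ∧ v n ≤ C₁ := by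
    filter_upwards [eventually_ge_atTop N₀, hd.eventually_gt_atTop 0] with n hn hdn
    obtain ⟨hlo, hhi⟩ := hasympR n hn
    rw [mul_assoc] at hlo hhi
    exact ⟨(le_div_iff₀ hdn).2 hlo, (div_le_iff₀ hdn).2 hhi⟩
  have hv_le := isBoundedUnder_of_eventually_le (hv.mono fun _ => And.right)
  have hv_ge := isBoundedUnder_of_eventually_ge (hv.mono fun _ => And.left)
  have huv : Tendsto (u - v) atTop (𝓝 0) :=
    tendsto_div_sub_div_of_abs_sub_le_mul_sqrt hd (fun n => hcomp (g^[n] R))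
      ((eventually_ge_atTop N₀).mono fun n hn => (mul_assoc C₁ _ _) ▸ (hasympR n hn).2)
  have hu_le := isBoundedUnder_le_of_tendsto_sub hv_le huv
  have hu_ge := isBoundedUnder_ge_of_tendsto_sub hv_ge huv
  have hfu : ∀ n, hhat (g^[n] (f R)) / d n = α * u n := fun n => by
    rw [← (Function.Commute.iterate_right hcomm n) R, hfe, mul_div_assoc]
  have hgu : ∀ n, hhat (g^[n] (g R)) / d n = d (n + 1) / d n * u (n + 1) := fun n => by
    rw [← Function.iterate_succ_apply, div_mul_div_cancel₀' (by positivity)]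
  refine ⟨?_, ?_, ?_⟩
  · rw [liminf_eq_of_tendsto_sub hv_le hv_ge huv]
    exact hC₀.trans_le (le_liminf_of_le hv_le.isCoboundedUnder_ge (hv.mono fun _ => And.left))
  · exact (liminf_congr (.of_forall hfu)).trans
      (liminf_const_mul_of_nonneg (by positivity) hu_le.isCoboundedUnder_ge hu_ge)
  · exact (liminf_congr (.of_forall hgu)).trans (liminf_mul_shift_of_tendsto (by positivity)
      (tendsto_natCast_pow_mul_pow_succ_div t (by positivity)) hu_le hu_ge)

theorem double_canonical_height_functional_equations {X : Type*}
    (f g : X → X) (hcomm : ∀ x, f (g x) = g (f x))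
    (h : X → ℝ) (hh : ∀ x, 1 ≤ h x)
    (α β : ℝ) (hα : 1 < α) (hβ : 1 < β) (t : ℕ)
    (hhat : X → ℝ) (hfe : ∀ x, hhat (f x) = α * hhat x)
    (R : X)
    (C₀ C₁ : ℝ) (hC₀ : 0 < C₀) (hC₁ : 0 < C₁) (N₀ : ℕ)
    (hasympR : ∀ n : ℕ, N₀ ≤ n →
      C₀ * (n : ℝ) ^ t * β ^ n ≤ h (g^[n] R) ∧
      h (g^[n] R) ≤ C₁ * (n : ℝ) ^ t * β ^ n)
    (C₂ C₃ : ℝ) (hC₂ : 0 < C₂) (hC₃ : 0 < C₃) (N₁ : ℕ)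
    (hasympfR : ∀ n : ℕ, N₁ ≤ n →
      C₂ * (n : ℝ) ^ t * β ^ n ≤ h (g^[n] (f R)) ∧
      h (g^[n] (f R)) ≤ C₃ * (n : ℝ) ^ t * β ^ n)
    (C : ℝ) (hcomp : ∀ x, |hhat x - h x| ≤ C * Real.sqrt (h x)) :
    0 < Filter.liminf (fun n : ℕ => hhat (g^[n] R) / ((n : ℝ) ^ t * β ^ n))
          Filter.atTop ∧
    Filter.liminf (fun n : ℕ => hhat (g^[n] (f R)) / ((n : ℝ) ^ t * β ^ n))
          Filter.atTop =
      α * Filter.liminf (fun n : ℕ => hhat (g^[n] R) / ((n : ℝ) ^ t * β ^ n))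
          Filter.atTop ∧
    Filter.liminf (fun n : ℕ => hhat (g^[n] (g R)) / ((n : ℝ) ^ t * β ^ n))
          Filter.atTop =
      β * Filter.liminf (fun n : ℕ => hhat (g^[n] R) / ((n : ℝ) ^ t * β ^ n))
          Filter.atTop :=
  double_canonical_height_functional_equations_general f g hcomm h α β hα hβ t hhat hfe R C₀ C₁ hC₀
    N₀ hasympR C hcomp
end
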